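/- For an orthogonal decomposition V = X ⊕ Y of a real inner product space, the supercommutant of C(X) in C(V) equals C(Y): an element a ∈ C(V) satisfies x·a = γ(a)·x for all x ∈ X if and only if a lies in the subalgebra generated by Y. -/

import Mathlib

open CliffordAlgebra
open scoped RealInnerProductSpace

/-- The quadratic form `v ↦ ⟪v, v⟫` of a real inner product space. -/
noncomputable def QOfInner (V : Type*) [NormedAddCommGroup V] [InnerProductSpace ℝ V] :
    QuadraticForm ℝ V :=
  LinearMap.BilinMap.toQuadraticMap (innerₗ V : LinearMap.BilinForm ℝ V)

section Aux
variable {V : Type*} [NormedAddCommGroup V] [InnerProductSpace ℝ V]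

lemma qoi_apply (v : V) : QOfInner V v = ⟪v, v⟫ := rfl

lemma qoi_isOrtho {x y : V} (h : ⟪x, y⟫ = 0) : (QOfInner V).IsOrtho x y := by
  unfold QuadraticMap.IsOrtho
  simp only [qoi_apply]
  rw [real_inner_add_add_self, h]
  ring

/-- easy direction / superA -/
lemma superA (x : V) (S : Set V) (hx : ∀ v ∈ S, ⟪x, v⟫ = 0) {a : CliffordAlgebra (QOfInner V)}
    (ha : a ∈ Algebra.adjoin ℝ (ι (QOfInner V) '' S)) :
    ι (QOfInner V) x * a = involute a * ι (QOfInner V) x := by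
  induction ha using Algebra.adjoin_induction with
  | mem b hb =>
    obtain ⟨v, hv, rfl⟩ := hb
    rw [involute_ι, ι_mul_ι_comm_of_isOrtho (qoi_isOrtho (hx v hv)), neg_mul]
  | algebraMap r => rw [involute.commutes r, Algebra.commutes]
  | add p q hp hq ihp ihq => rw [map_add, mul_add, add_mul, ihp, ihq]
  | mul p q hp hq ihp ihq =>
    rw [map_mul, ← mul_assoc, ihp, mul_assoc, ihq, mul_assoc]

lemma invA (S : Set V) {a : CliffordAlgebra (QOfInner V)}
    (ha : a ∈ Algebra.adjoin ℝ (ι (QOfInner V) '' S)) :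
    involute a ∈ Algebra.adjoin ℝ (ι (QOfInner V) '' S) := by
  induction ha using Algebra.adjoin_induction with
  | mem b hb =>
    obtain ⟨v, hv, rfl⟩ := hb
    rw [involute_ι]
    exact neg_mem (Algebra.subset_adjoin ⟨v, hv, rfl⟩)
  | algebraMap r => rw [involute.commutes r]; exact Subalgebra.algebraMap_mem _ r
  | add p q hp hq ihp ihq => rw [map_add]; exact add_mem ihp ihq
  | mul p q hp hq ihp ihq => rw [map_mul]; exact mul_mem ihp ihq

lemma decompB (x : V) (S : Set V) (hx : ∀ v ∈ S, ⟪x, v⟫ = 0) {a : CliffordAlgebra (QOfInner V)}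
    (ha : a ∈ Algebra.adjoin ℝ (ι (QOfInner V) '' insert x S)) :
    ∃ b ∈ Algebra.adjoin ℝ (ι (QOfInner V) '' S),
      ∃ c ∈ Algebra.adjoin ℝ (ι (QOfInner V) '' S), a = b + ι (QOfInner V) x * c := by
  induction ha using Algebra.adjoin_induction with
  | mem w hw =>
    obtain ⟨v, hv, rfl⟩ := hw
    rcases hv with rfl | hv
    · exact ⟨0, zero_mem _, 1, one_mem _, by simp⟩
    · exact ⟨ι (QOfInner V) v, Algebra.subset_adjoin ⟨v, hv, rfl⟩, 0, zero_mem _, by simp⟩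
  | algebraMap r => exact ⟨algebraMap ℝ _ r, Subalgebra.algebraMap_mem _ r, 0, zero_mem _, by simp⟩
  | add p q hp hq ihp ihq =>
    obtain ⟨b, hb, c, hc, rfl⟩ := ihp
    obtain ⟨b', hb', c', hc', rfl⟩ := ihq
    exact ⟨b + b', add_mem hb hb', c + c', add_mem hc hc', by rw [mul_add]; abel⟩
  | mul p q hp hq ihp ihq =>
    obtain ⟨b, hb, c, hc, rfl⟩ := ihp
    obtain ⟨b', hb', c', hc', rfl⟩ := ihq
    refine ⟨b * b' + algebraMap ℝ _ (QOfInner V x) * (involute c * c'),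
      add_mem (mul_mem hb hb')
        (mul_mem (Subalgebra.algebraMap_mem _ _) (mul_mem (invA S hc) hc')),
      involute b * c' + c * b', add_mem (mul_mem (invA S hb) hc') (mul_mem hc hb'), ?_⟩
    have key : ∀ d ∈ Algebra.adjoin ℝ (ι (QOfInner V) '' S),
        d * ι (QOfInner V) x = ι (QOfInner V) x * involute d := by
      intro d hd
      have := superA x S hx (invA S hd)
      rwa [involute_involute, eq_comm] at this
    have h1 : b * (ι (QOfInner V) x * c') = ι (QOfInner V) x * (involute b * c') := by
      rw [← mul_assoc, key b hb, mul_assoc]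
    have h2 : ι (QOfInner V) x * c * (ι (QOfInner V) x * c')
        = algebraMap ℝ _ (QOfInner V x) * (involute c * c') := by
      rw [mul_assoc, ← mul_assoc c, key c hc, ← mul_assoc, ← mul_assoc, ι_sq_scalar, mul_assoc]
    rw [add_mul, mul_add, mul_add, h1, h2, mul_add, ← mul_assoc (ι (QOfInner V) x) c b']
    abel

lemma strip : ∀ (n : ℕ) (f : Fin n → V) (T : Set V),
    (∀ i, f i ≠ 0) → (∀ i j, i ≠ j → ⟪f i, f j⟫ = 0) → (∀ i, ∀ t ∈ T, ⟪f i, t⟫ = 0) →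
    ∀ a : CliffordAlgebra (QOfInner V),
      a ∈ Algebra.adjoin ℝ (ι (QOfInner V) '' (Set.range f ∪ T)) →
      (∀ i, ι (QOfInner V) (f i) * a = involute a * ι (QOfInner V) (f i)) →
      a ∈ Algebra.adjoin ℝ (ι (QOfInner V) '' T) := by
  intro n
  induction n with
  | zero =>
    intro f T _ _ _ a ha _
    simpa [Set.range_eq_empty] using ha
  | succ n ih =>
    intro f T h0 hor hT a ha hc
    set x := f 0 with hxdef
    set g : Fin n → V := f ∘ Fin.succ with hgdef
    set S : Set V := Set.range g ∪ T with hSdef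
    have hxS : ∀ v ∈ S, ⟪x, v⟫ = 0 := by
      rintro v (⟨i, rfl⟩ | hv)
      · exact hor 0 (Fin.succ i) (Fin.succ_ne_zero i).symm
      · exact hT 0 v hv
    have hrange : Set.range f ∪ T = insert x S := by
      rw [hSdef, ← Set.insert_union]
      congr 1
      ext v
      constructor
      · rintro ⟨i, rfl⟩
        induction i using Fin.cases with
        | zero => exact Set.mem_insert _ _
        | succ j => exact Set.mem_insert_of_mem _ ⟨j, rfl⟩
      · rintro (rfl | ⟨i, rfl⟩)
        · exact ⟨0, rfl⟩
        · exact ⟨Fin.succ i, rfl⟩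
    rw [hrange] at ha
    obtain ⟨b, hb, c, hcS, hab⟩ := decompB x S hxS ha
    -- show c = 0
    have hQx : QOfInner V x ≠ 0 := by
      rw [qoi_apply]
      exact fun h => h0 0 ((inner_self_eq_zero (𝕜 := ℝ)).1 h)
    have key : ∀ d ∈ Algebra.adjoin ℝ (ι (QOfInner V) '' S),
        d * ι (QOfInner V) x = ι (QOfInner V) x * involute d := by
      intro d hd
      have := superA x S hxS (invA S hd)
      rwa [involute_involute, eq_comm] at this
    have e1 : ι (QOfInner V) x * a
        = ι (QOfInner V) x * b + algebraMap ℝ _ (QOfInner V x) * c := by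
      rw [hab, mul_add, ← mul_assoc, ι_sq_scalar]
    have e2 : involute a * ι (QOfInner V) x
        = ι (QOfInner V) x * b - algebraMap ℝ _ (QOfInner V x) * c := by
      rw [hab, map_add, map_mul, involute_ι, add_mul, superA x S hxS hb, neg_mul, neg_mul,
        mul_assoc, key _ (invA S hcS), involute_involute, ← mul_assoc, ι_sq_scalar,
        sub_eq_add_neg]
    have e3 := (e1.symm.trans (hc 0)).trans e2
    have e4 : algebraMap ℝ (CliffordAlgebra (QOfInner V)) (QOfInner V x) * c = 0 := by
      rw [sub_eq_add_neg] at e3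
      have h5 := add_left_cancel e3
      rw [eq_neg_iff_add_eq_zero] at h5
      have : (2 : ℝ) • (algebraMap ℝ (CliffordAlgebra (QOfInner V)) (QOfInner V x) * c) = 0 := by
        rw [two_smul, h5]
      simpa using this
    rw [← Algebra.smul_def, smul_eq_zero] at e4
    have hc0 : c = 0 := e4.resolve_left hQx
    have hab' : a = b := by rw [hab, hc0, mul_zero, add_zero]
    rw [hab']
    exact ih g T (fun i => h0 i.succ) (fun i j hij => hor i.succ j.succ (by simpa using hij))
      (fun i => hT i.succ) b hb (fun i => by rw [← hab']; exact hc i.succ)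

end Aux

/-- for an orthogonal decomposition `V = X ⊕ Y` of a real inner product
space, the supercommutant of `C(X)` in `C(V)` is `C(Y)`: an element `a` satisfies
`x·a = γ(a)·x` for all `x ∈ X` iff `a` lies in the subalgebra generated by `Y`. -/
theorem supercommutant_orthogonal_decomposition
    {V : Type*} [NormedAddCommGroup V] [InnerProductSpace ℝ V]
    (X Y : Submodule ℝ V) (hXY : IsCompl X Y)
    (horth : ∀ x ∈ X, ∀ y ∈ Y, ⟪x, y⟫ = 0) :
    {a : CliffordAlgebra (QOfInner V) |
        ∀ x ∈ X, ι (QOfInner V) x * a = involute a * ι (QOfInner V) x}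
      = (Algebra.adjoin ℝ (ι (QOfInner V) '' (Y : Set V)) :
          Set (CliffordAlgebra (QOfInner V))) := by
  classical
  ext a
  simp only [Set.mem_setOf_eq, SetLike.mem_coe]
  constructor
  · intro ha
    -- reduce to a finite set of generators
    have hfin : ∀ b : CliffordAlgebra (QOfInner V),
        b ∈ ⨆ s : Finset V, Algebra.adjoin ℝ (ι (QOfInner V) '' (s : Set V)) := by
      intro b
      induction b using CliffordAlgebra.induction with
      | algebraMap r => exact Subalgebra.algebraMap_mem _ r
      | ι v =>
        exact le_iSup (fun s : Finset V =>
          Algebra.adjoin ℝ (ι (QOfInner V) '' (s : Set V))) {v}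
          (Algebra.subset_adjoin ⟨v, by simp, rfl⟩)
      | mul p q hp hq => exact mul_mem hp hq
      | add p q hp hq => exact add_mem hp hq
    have hdir : Directed (· ≤ ·)
        (fun s : Finset V => Algebra.adjoin ℝ (ι (QOfInner V) '' (s : Set V))) := by
      intro s t
      exact ⟨s ∪ t,
        Algebra.adjoin_mono (Set.image_mono (Finset.coe_subset.2 Finset.subset_union_left)),
        Algebra.adjoin_mono (Set.image_mono (Finset.coe_subset.2 Finset.subset_union_right))⟩
    have hfa := hfin a
    rw [← SetLike.mem_coe, Subalgebra.coe_iSup_of_directed hdir] at hfa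
    obtain ⟨s, hs⟩ := Set.mem_iUnion.1 hfa
    rw [SetLike.mem_coe] at hs
    -- decompose every vector into X and Y parts
    have hdec : ∀ v : V, ∃ xv ∈ X, ∃ yv ∈ Y, xv + yv = v := by
      intro v
      have hv : v ∈ X ⊔ Y := by rw [hXY.codisjoint.eq_top]; trivial
      exact Submodule.mem_sup.1 hv
    choose fx hfx fy hfy hsum using hdec
    set X₀ : Submodule ℝ V := Submodule.span ℝ (fx '' (s : Set V)) with hX₀def
    haveI : FiniteDimensional ℝ X₀ :=
      FiniteDimensional.span_of_finite ℝ (s.finite_toSet.image fx)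
    set b := stdOrthonormalBasis ℝ X₀ with hbdef
    set f : Fin (Module.finrank ℝ X₀) → V := fun i => ((b i : X₀) : V) with hfdef
    have hX₀X : X₀ ≤ X := Submodule.span_le.2 (by rintro _ ⟨v, hv, rfl⟩; exact hfx v)
    have hfX : ∀ i, f i ∈ X := fun i => hX₀X (b i).2
    have hspan : Submodule.span ℝ (Set.range f) = X₀ := by
      have h1 : Set.range f = X₀.subtype '' Set.range (⇑b) := by
        ext w
        simp [hfdef, Set.range_comp]
      rw [h1, ← Submodule.map_span]
      have h2 : Submodule.span ℝ (Set.range ⇑b) = (⊤ : Submodule ℝ X₀) := by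
        have := b.toBasis.span_eq
        rwa [b.coe_toBasis] at this
      rw [h2, Submodule.map_subtype_top]
    have cl : ∀ w ∈ X₀, ι (QOfInner V) w ∈
        Algebra.adjoin ℝ (ι (QOfInner V) '' (Set.range f ∪ (Y : Set V))) := by
      intro w hw
      rw [← hspan] at hw
      induction hw using Submodule.span_induction with
      | mem w hw => exact Algebra.subset_adjoin ⟨w, Or.inl hw, rfl⟩
      | zero => rw [map_zero]; exact zero_mem _
      | add u v hu hv ihu ihv => rw [map_add]; exact add_mem ihu ihv
      | smul r u hu ihu => rw [map_smul]; exact Subalgebra.smul_mem _ ihu r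
    have hmem : a ∈ Algebra.adjoin ℝ (ι (QOfInner V) '' (Set.range f ∪ (Y : Set V))) := by
      refine Algebra.adjoin_le ?_ hs
      rintro _ ⟨v, hv, rfl⟩
      rw [← hsum v, map_add]
      exact add_mem (cl _ (Submodule.subset_span ⟨v, hv, rfl⟩))
        (Algebra.subset_adjoin ⟨fy v, Or.inr (hfy v), rfl⟩)
    have h0 : ∀ i, f i ≠ 0 := by
      intro i h
      have h' : ((b i : X₀) : V) = 0 := h
      have h1 : (b i : X₀) = 0 := by exact_mod_cast h'
      have h2 := b.orthonormal.1 i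
      rw [h1] at h2
      simp at h2
    have hor : ∀ i j, i ≠ j → ⟪f i, f j⟫ = 0 := by
      intro i j hij
      have h2 : (inner ℝ (b i) (b j) : ℝ) = 0 := b.orthonormal.2 hij
      rwa [Submodule.coe_inner] at h2
    have hT : ∀ i, ∀ t ∈ (Y : Set V), ⟪f i, t⟫ = 0 := fun i t ht => horth _ (hfX i) t ht
    exact strip _ f (Y : Set V) h0 hor hT a hmem (fun i => ha (f i) (hfX i))
  · intro ha x hx
    exact superA x (Y : Set V) (fun v hv => horth x hx v hv) ha
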